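/- For all real numbers a, b with 0 < a < 1, 0 < b < 1, and every x > 0, the triple integral ∫₀ˣ ∫₀^∞ ∫₀^w (1 − e^{−(x−y)})^{a−1} (1 − e^{−(w−u)})^{b−1} e^{−(w−u)} e^{(b+1)(y+w)} (e^{y+w} − 1)^{−(a+b+1)} du dw dy equals π Γ(a) Γ(b) / (sin(πa) Γ(a+b+1)). -/

import Mathlib

/-!
The triple integral is evaluated from the inside out, each one-dimensional integral being turned
into a Beta integral by a substitution that is a Möbius map of an exponential:
* over `u`, with `t = (e^{-(w-u)} - e^{-w}) / (1 - e^{-w})`, it is `B(1, b) (1 - e^{-w})^b`;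
* over `w`, with `t = (1 - e^{-w}) / (1 - e^{-(y+w)})`, it is `B(b+1, a) (e^y - 1)^{-a}`;
* over `y`, with `t = (1 - e^{-y}) / (1 - e^{-x})`, it is `B(1-a, a) = π / sin (π a)`.
Finally `B(1, b) B(b+1, a) = Γ(a) Γ(b) / Γ(a+b+1)`. The change of variables formula holds for
arbitrary integrands, so no integrability or Fubini argument is needed.
-/

open MeasureTheory Real Set ProbabilityTheory

theorem integral_Ioo_rpow_mul_one_sub_rpow {α β : ℝ} (hα : 0 < α) (hβ : 0 < β) :
    ∫ t in Ioo (0 : ℝ) 1, t ^ (α - 1) * (1 - t) ^ (β - 1) = beta α β := by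
  have h : Complex.betaIntegral α β
      = ((∫ t in (0 : ℝ)..1, t ^ (α - 1) * (1 - t) ^ (β - 1) : ℝ) : ℂ) := by
    rw [Complex.betaIntegral, ← intervalIntegral.integral_ofReal]
    refine intervalIntegral.integral_congr fun t ht => ?_
    rw [uIcc_of_le zero_le_one] at ht
    push_cast
    rw [Complex.ofReal_cpow ht.1, Complex.ofReal_cpow (sub_nonneg.2 ht.2)]
    push_cast
    rfl
  rw [beta_eq_betaIntegralReal α β hα hβ, h, Complex.ofReal_re,
    intervalIntegral.integral_of_le zero_le_one, integral_Ioc_eq_integral_Ioo]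

theorem integral_eq_mul_beta_of_hasDerivAt {s : Set ℝ} (hs : IsOpen s) (hs' : Convex ℝ s)
    {φ φ' F : ℝ → ℝ} {α β c : ℝ} (hα : 0 < α) (hβ : 0 < β)
    (hφ : ∀ t ∈ s, HasDerivAt φ (φ' t) t) (hφ' : ∀ t ∈ s, 0 < φ' t)
    (hmaps : MapsTo φ s (Ioo 0 1)) (hsurj : SurjOn φ s (Ioo 0 1))
    (hF : ∀ t ∈ s, F t = c * φ' t * (φ t ^ (α - 1) * (1 - φ t) ^ (β - 1))) :
    ∫ t in s, F t = c * beta α β := by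
  have hmono : StrictMonoOn φ s :=
    strictMonoOn_of_hasDerivWithinAt_pos hs'
      (fun t ht => (hφ t ht).continuousAt.continuousWithinAt)
      (fun t ht => (hφ t (interior_subset ht)).hasDerivWithinAt)
      (fun t ht => hφ' t (interior_subset ht))
  rw [← integral_Ioo_rpow_mul_one_sub_rpow hα hβ, ← hsurj.image_eq_of_mapsTo hmaps,
    integral_image_eq_integral_abs_deriv_smul hs.measurableSet
      (fun t ht => (hφ t ht).hasDerivWithinAt) hmono.injOn, ← integral_const_mul]
  refine setIntegral_congr_fun hs.measurableSet fun t ht => ?_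
  rw [hF t ht, smul_eq_mul, abs_of_pos (hφ' t ht), mul_assoc]

theorem one_sub_exp_neg_pos {t : ℝ} (ht : 0 < t) : 0 < 1 - exp (-t) :=
  sub_pos.2 (exp_lt_one_iff.2 (neg_neg_of_pos ht))

theorem integral_Ioo_one_sub_exp_rpow_mul_exp {b w : ℝ} (hb : 0 < b) (hw : 0 < w) :
    ∫ u in Ioo 0 w, (1 - exp (-(w - u))) ^ (b - 1) * exp (-(w - u))
      = (1 - exp (-w)) ^ b * beta 1 b := by
  have hK := one_sub_exp_neg_pos hw
  refine integral_eq_mul_beta_of_hasDerivAt isOpen_Ioo (convex_Ioo 0 w) one_pos hb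
    (φ := fun u => (exp (-(w - u)) - exp (-w)) / (1 - exp (-w)))
    (φ' := fun u => exp (-(w - u)) / (1 - exp (-w)))
    (fun u _ => (((hasDerivAt_id u).const_sub w).neg.exp.sub_const _).div_const _
      |>.congr_deriv (by simp))
    (fun u _ => by positivity) ?_ ?_ ?_
  · rintro u ⟨hu0, huw⟩
    exact ⟨div_pos (sub_pos.2 (exp_lt_exp.2 (by linarith))) hK,
      (div_lt_one hK).2 (sub_lt_sub_right (exp_lt_one_iff.2 (by linarith)) _)⟩
  · rintro t ⟨ht0, ht1⟩
    have hr : exp (-w) < exp (-w) + t * (1 - exp (-w)) := by nlinarith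
    have hr' : exp (-w) + t * (1 - exp (-w)) < 1 := by nlinarith
    have hr0 : 0 < exp (-w) + t * (1 - exp (-w)) := by linarith [exp_pos (-w)]
    refine ⟨w + log (exp (-w) + t * (1 - exp (-w))), ⟨?_, ?_⟩, ?_⟩
    · have := log_lt_log (exp_pos _) hr
      rw [log_exp] at this
      linarith
    · linarith [log_neg hr0 hr']
    · simp only [show ∀ v, -(w - (w + v)) = v by intro; ring, exp_log hr0]
      field_simp
      ring
  · rintro u ⟨hu0, huw⟩
    have hA := one_sub_exp_neg_pos (sub_pos.2 huw)
    have h1φ : 1 - (exp (-(w - u)) - exp (-w)) / (1 - exp (-w))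
        = (1 - exp (-(w - u))) / (1 - exp (-w)) := by
      field_simp
      ring
    rw [h1φ, sub_self, rpow_zero, div_rpow hA.le hK.le, rpow_sub_one hK.ne']
    field_simp

theorem integral_Ioi_one_sub_exp_rpow_mul_exp_mul_exp_sub_one_rpow {a b y : ℝ} (ha : 0 < a)
    (hb : 0 < b) (hy : 0 < y) :
    ∫ w in Ioi 0, (1 - exp (-w)) ^ b * exp ((b + 1) * (y + w))
        * (exp (y + w) - 1) ^ (-(a + b + 1))
      = (exp y - 1) ^ (-a) * beta (b + 1) a := by
  have hQ := one_sub_exp_neg_pos hy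
  have hL : ∀ w, 0 < w → 0 < 1 - exp (-(y + w)) := fun w hw => one_sub_exp_neg_pos (by linarith)
  have hPL : ∀ w, exp (-w) - exp (-(y + w)) = exp (-w) * (1 - exp (-y)) := fun w => by
    rw [neg_add, exp_add]
    ring
  refine integral_eq_mul_beta_of_hasDerivAt isOpen_Ioi (convex_Ioi 0) (by linarith) ha
    (φ := fun w => (1 - exp (-w)) / (1 - exp (-(y + w))))
    (φ' := fun w => exp (-w) * (1 - exp (-y)) / (1 - exp (-(y + w))) ^ 2) (fun w hw => ?_)
    (fun w hw => div_pos (mul_pos (exp_pos _) hQ) (pow_pos (hL w hw) 2)) ?_ ?_ ?_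
  · have hnum : HasDerivAt (fun w => 1 - exp (-w)) (exp (-w)) w := by
      simpa using (hasDerivAt_neg w).exp.const_sub 1
    have hden : HasDerivAt (fun w => 1 - exp (-(y + w))) (exp (-(y + w))) w := by
      simpa using ((hasDerivAt_id w).const_add y).neg.exp.const_sub 1
    refine (hnum.div hden (hL w hw).ne').congr_deriv ?_
    rw [← hPL]
    ring
  · intro w (hw : 0 < w)
    have hlt : exp (-(y + w)) < exp (-w) := exp_lt_exp.2 (by linarith)
    exact ⟨div_pos (one_sub_exp_neg_pos hw) (hL w hw), (div_lt_one (hL w hw)).2 (by linarith)⟩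
  · rintro t ⟨ht0, ht1⟩
    have hq : exp (-y) < 1 := exp_lt_one_iff.2 (by linarith)
    have hD : 0 < 1 - exp (-y) * t := by nlinarith [exp_pos (-y)]
    set m := (1 - t) / (1 - exp (-y) * t)
    have hmD : m * (1 - exp (-y) * t) = 1 - t := div_mul_cancel₀ _ hD.ne'
    have hm0 : 0 < m := div_pos (by linarith) hD
    have hm1 : m < 1 := (div_lt_one hD).2 (by nlinarith [exp_pos (-y)])
    refine ⟨-log m, neg_pos.2 (log_neg hm0 hm1), ?_⟩
    simp only [neg_neg, neg_add, exp_add, exp_log hm0]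
    rw [div_eq_iff (by nlinarith [exp_pos (-y)])]
    linear_combination -hmD
  · intro w (hw : 0 < w)
    have h1 : exp (y + w) - 1 = exp (y + w) * (1 - exp (-(y + w))) := by
      rw [mul_sub, ← exp_add]
      simp
    have h2 : exp y - 1 = exp y * (1 - exp (-y)) := by
      rw [mul_sub, ← exp_add]
      simp
    have h3 : 1 - (1 - exp (-w)) / (1 - exp (-(y + w)))
        = exp (-w) * (1 - exp (-y)) / (1 - exp (-(y + w))) := by
      rw [eq_div_iff (hL w hw).ne', sub_mul, div_mul_cancel₀ _ (hL w hw).ne', ← hPL]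
      ring
    rw [h1, h2, h3]
    have hP := one_sub_exp_neg_pos hw
    have hLw := hL w hw
    set P := 1 - exp (-w)
    set Q := 1 - exp (-y)
    set L := 1 - exp (-(y + w))
    refine log_injOn_pos (mem_Ioi.2 (by positivity)) (mem_Ioi.2 (by positivity)) ?_
    simp (disch := positivity) only [log_mul, log_div, log_rpow, log_exp, log_pow]
    push_cast
    ring

theorem integral_Ioo_one_sub_exp_rpow_mul_exp_sub_one_rpow {a x : ℝ} (ha : 0 < a) (ha1 : a < 1)
    (hx : 0 < x) :
    ∫ y in Ioo 0 x, (1 - exp (-(x - y))) ^ (a - 1) * (exp y - 1) ^ (-a) = beta (1 - a) a := by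
  have hK := one_sub_exp_neg_pos hx
  rw [← one_mul (beta (1 - a) a)]
  refine integral_eq_mul_beta_of_hasDerivAt isOpen_Ioo (convex_Ioo 0 x) (by linarith) ha
    (φ := fun y => (1 - exp (-y)) / (1 - exp (-x)))
    (φ' := fun y => exp (-y) / (1 - exp (-x)))
    (fun y _ => (((hasDerivAt_neg y).exp.const_sub 1).div_const _).congr_deriv (by ring))
    (fun y _ => by positivity) ?_ ?_ ?_
  · rintro y ⟨hy0, hyx⟩
    have hlt : exp (-x) < exp (-y) := exp_lt_exp.2 (by linarith)
    exact ⟨div_pos (one_sub_exp_neg_pos hy0) hK, (div_lt_one hK).2 (by linarith)⟩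
  · rintro t ⟨ht0, ht1⟩
    have hr0 : 0 < 1 - t * (1 - exp (-x)) := by nlinarith [exp_pos (-x)]
    have hr1 : 1 - t * (1 - exp (-x)) < 1 := by nlinarith
    have hr : exp (-x) < 1 - t * (1 - exp (-x)) := by nlinarith
    refine ⟨-log (1 - t * (1 - exp (-x))), ⟨neg_pos.2 (log_neg hr0 hr1), ?_⟩, ?_⟩
    · have := log_lt_log (exp_pos _) hr
      rw [log_exp] at this
      linarith
    · simp only [neg_neg, exp_log hr0]
      field_simp
      ring
  · rintro y ⟨hy0, hyx⟩
    have hA := one_sub_exp_neg_pos (sub_pos.2 hyx)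
    have hB := one_sub_exp_neg_pos hy0
    have h1 : exp y - 1 = exp y * (1 - exp (-y)) := by
      rw [mul_sub, ← exp_add]
      simp
    have h2 : 1 - (1 - exp (-y)) / (1 - exp (-x))
        = exp (-y) * (1 - exp (-(x - y))) / (1 - exp (-x)) := by
      have hxy : exp (-y) * exp (-(x - y)) = exp (-x) := by
        rw [← exp_add]
        ring_nf
      rw [eq_div_iff hK.ne', sub_mul, div_mul_cancel₀ _ hK.ne']
      linear_combination hxy
    rw [h1, h2]
    set A := 1 - exp (-(x - y))
    set B := 1 - exp (-y)
    set K := 1 - exp (-x)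
    refine log_injOn_pos (mem_Ioi.2 (by positivity)) (mem_Ioi.2 (by positivity)) ?_
    simp (disch := positivity) only [log_mul, log_div, log_rpow, log_exp, log_one]
    ring

theorem beta_mul_beta_add {x y z : ℝ} (h : Gamma (x + y) ≠ 0) :
    beta x y * beta (x + y) z = Gamma x * Gamma y * Gamma z / Gamma (x + y + z) := by
  simp only [beta]
  field_simp

theorem beta_one_sub (a : ℝ) : beta (1 - a) a = π / sin (π * a) := by
  rw [beta, sub_add_cancel, Gamma_one, div_one, mul_comm, Gamma_mul_Gamma_one_sub]

theorem statement16_general (a b x : ℝ) (ha : 0 < a) (ha1 : a < 1) (hb : 0 < b)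
    (hx : 0 < x) :
    (∫ y in Ioo (0:ℝ) x, ∫ w in Ioi (0:ℝ), ∫ u in Ioo (0:ℝ) w,
        (1 - Real.exp (-(x - y))) ^ (a - 1) * (1 - Real.exp (-(w - u))) ^ (b - 1)
          * Real.exp (-(w - u)) * Real.exp ((b + 1) * (y + w))
          * (Real.exp (y + w) - 1) ^ (-(a + b + 1)))
      = π * Gamma a * Gamma b / (Real.sin (π * a) * Gamma (a + b + 1)) := by
  have hsin : sin (π * a) ≠ 0 :=
    (sin_pos_of_pos_of_lt_pi (by positivity) (by nlinarith [pi_pos])).ne'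
  calc _ = ∫ y in Ioo 0 x, ∫ w in Ioi 0, (1 - exp (-(x - y))) ^ (a - 1)
          * (exp ((b + 1) * (y + w)) * (exp (y + w) - 1) ^ (-(a + b + 1)))
          * ((1 - exp (-w)) ^ b * beta 1 b) := by
        refine setIntegral_congr_fun measurableSet_Ioo fun y _ =>
          setIntegral_congr_fun measurableSet_Ioi fun w hw => ?_
        rw [← integral_Ioo_one_sub_exp_rpow_mul_exp hb hw, ← integral_const_mul]
        congr 1; ext u; ring
    _ = ∫ y in Ioo 0 x, beta 1 b * (1 - exp (-(x - y))) ^ (a - 1)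
          * ((exp y - 1) ^ (-a) * beta (b + 1) a) := by
        refine setIntegral_congr_fun measurableSet_Ioo fun y hy => ?_
        rw [← integral_Ioi_one_sub_exp_rpow_mul_exp_mul_exp_sub_one_rpow ha hb hy.1,
          ← integral_const_mul]
        congr 1; ext w; ring
    _ = beta 1 b * beta (b + 1) a * beta (1 - a) a := by
        rw [← integral_Ioo_one_sub_exp_rpow_mul_exp_sub_one_rpow ha ha1 hx, ← integral_const_mul]
        congr 1; ext y; ring
    _ = _ := by
        rw [beta_one_sub, add_comm b 1, beta_mul_beta_add (Gamma_pos_of_pos (by linarith)).ne',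
          Gamma_one, show 1 + b + a = a + b + 1 by ring]
        field_simp

theorem statement16 (a b x : ℝ) (ha : 0 < a) (ha1 : a < 1) (hb : 0 < b) (hb1 : b < 1)
    (hx : 0 < x) :
    (∫ y in Ioo (0:ℝ) x, ∫ w in Ioi (0:ℝ), ∫ u in Ioo (0:ℝ) w,
        (1 - Real.exp (-(x - y))) ^ (a - 1) * (1 - Real.exp (-(w - u))) ^ (b - 1)
          * Real.exp (-(w - u)) * Real.exp ((b + 1) * (y + w))
          * (Real.exp (y + w) - 1) ^ (-(a + b + 1)))
      = π * Gamma a * Gamma b / (Real.sin (π * a) * Gamma (a + b + 1)) :=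
  statement16_general a b x ha ha1 hb hx
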